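/- Let Q be a bounded sublinear rate operator on ℬ, and for each t ≥ 0 let e^{tQ} denote the limit in operator seminorm of the sequence ((I + (t/n)Q)^n)_{n∈ℕ}. Then (e^{tQ})_{t≥0} is a uniformly continuous semigroup of sublinear transition operators: e^{0Q} = I, e^{(s+t)Q} = e^{sQ} ∘ e^{tQ} for all s, t ≥ 0, each e^{tQ} is a sublinear transition operator, and ‖e^{sQ} − e^{tQ}‖ → 0 as s → t for every t ≥ 0. -/

import Mathlib

open Filter Topology BoundedContinuousFunction ENNReal NNReal

/-- The space of (possibly nonlinear) operators on the Banach space `X →ᵇ ℝ`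
of bounded (continuous, i.e. with `X` discrete: all) real-valued functions. -/
abbrev Op (X : Type*) [TopologicalSpace X] :=
  BoundedContinuousFunction X ℝ → BoundedContinuousFunction X ℝ

/-- The operator seminorm `‖A‖ = sup {‖A f‖/‖f‖ : f ≠ 0}`, a value in `[0,∞]`. -/
noncomputable def opSemiNorm {X : Type*} [TopologicalSpace X] (A : Op X) : ℝ≥0∞ :=
  ⨆ (f : BoundedContinuousFunction X ℝ) (_ : f ≠ 0), (‖A f‖₊ : ℝ≥0∞) / (‖f‖₊ : ℝ≥0∞)

/-- The operator norm distance `d(A,B) = ‖A 0 − B 0‖∞ + ‖A − B‖`. -/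
noncomputable def opDist {X : Type*} [TopologicalSpace X] (A B : Op X) : ℝ≥0∞ :=
  (‖A 0 - B 0‖₊ : ℝ≥0∞) + opSemiNorm (A - B)

/-- Sublinear transition operator: (T1) positive homogeneity, (T2) subadditivity,
(T3) `T f ≤ sup f` pointwise. -/
def IsSublinearTransition {X : Type*} [TopologicalSpace X] (T : Op X) : Prop :=
  (∀ (c : ℝ), 0 ≤ c → ∀ f, T (c • f) = c • T f) ∧
  (∀ f g, ∀ x, T (f + g) x ≤ T f x + T g x) ∧
  (∀ f, ∀ x, T f x ≤ ⨆ y, f y)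

/-- Sublinear rate operator: (Q1) positive homogeneity, (Q2) subadditivity,
(Q3) constants map to zero, (Q4) positive maximum principle. -/
def IsSublinearRate {X : Type*} [TopologicalSpace X] (Q : Op X) : Prop :=
  (∀ (c : ℝ), 0 ≤ c → ∀ f, Q (c • f) = c • Q f) ∧
  (∀ f g, ∀ x, Q (f + g) x ≤ Q f x + Q g x) ∧
  (∀ (c : ℝ), Q (BoundedContinuousFunction.const X c) = 0) ∧
  (∀ f, ∀ x : X, (⨆ y, f y) = f x → 0 ≤ f x → Q f x ≤ 0)

/-- The Euler approximation `(I + (t/n) Q)^n` (n-fold composition). -/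
noncomputable def euler {X : Type*} [TopologicalSpace X] (Q : Op X) (t : ℝ) (n : ℕ) : Op X :=
  (fun f => f + (t / (n : ℝ)) • Q f)^[n]

/-- Uniform continuity of a semigroup `(S_t)_{t ≥ 0}`:
`‖S_s − S_t‖ → 0` as `s → t` (within `s ≥ 0`), for every `t ≥ 0`. -/
def IsUniformlyContinuousSG {X : Type*} [TopologicalSpace X] (S : ℝ → Op X) : Prop :=
  ∀ t : ℝ, 0 ≤ t →
    Tendsto (fun s => opSemiNorm (S s - S t)) (nhdsWithin t (Set.Ici 0)) (nhds 0)

/-- The indicator function `1_x` of the singleton `{x}`. -/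
noncomputable def indic {X : Type*} [TopologicalSpace X] [DiscreteTopology X] (x : X) :
    BoundedContinuousFunction X ℝ :=
  BoundedContinuousFunction.ofNormedAddCommGroup
    (Set.indicator {x} (fun _ => (1 : ℝ))) continuous_of_discreteTopology 1
    (by
      intro y
      classical
      rw [Set.indicator_apply]
      split_ifs <;> simp)

/-- Downward continuity (continuity from above) of an operator. -/
def DownwardContinuous {X : Type*} [TopologicalSpace X] (A : Op X) : Prop :=
  ∀ (f : ℕ → BoundedContinuousFunction X ℝ) (g : BoundedContinuousFunction X ℝ),
    (∀ n x, f (n + 1) x ≤ f n x) →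
    (∀ x, Tendsto (fun n => f n x) atTop (nhds (g x))) →
    ∀ x, Tendsto (fun n => A (f n) x) atTop (nhds (A g x))

/-! For `n ≥ t‖Q‖` the Euler step `I + (t/n)Q` is itself a sublinear transition operator: the
positive maximum principle gives `Qf(x) ≤ ‖Q‖ (sup f - f(x))`. Hence the Euler approximations
are eventually sublinear transition operators, in particular `1`-Lipschitz, and these properties
pass to the limit. Telescoping `n` steps gives
`‖(I + (s/n)Q)^n f - (I + (t/n)Q)^n f‖ ≤ |s - t| ‖Q‖ ‖f‖`, so `t ↦ e^{tQ}` is Lipschitz in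
operator seminorm. For commensurable times `aδ`, `bδ` the Euler schemes with the common step
`δ/n` compose exactly, and Lipschitz continuity extends the semigroup law to all times. -/

section
variable {X : Type*} [TopologicalSpace X]

lemma BoundedContinuousFunction.le_iSup_apply (f : X →ᵇ ℝ) (x : X) : f x ≤ ⨆ y, f y :=
  le_ciSup ⟨‖f‖, Set.forall_mem_range.2 f.apply_le_norm⟩ x

lemma BoundedContinuousFunction.iSup_apply_le_norm (f : X →ᵇ ℝ) : ⨆ y, f y ≤ ‖f‖ :=
  Real.iSup_le f.apply_le_norm (norm_nonneg f)

lemma norm_indic [DiscreteTopology X] (x : X) : ‖indic x‖ = 1 := by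
  refine le_antisymm (norm_ofNormedAddCommGroup_le _ zero_le_one _) ?_
  simpa [indic] using (indic x).norm_coe_le_norm x

lemma enorm_apply_le_opSemiNorm_mul (A : Op X) {f : X →ᵇ ℝ} (hf : f ≠ 0) :
    (‖A f‖₊ : ℝ≥0∞) ≤ opSemiNorm A * ‖f‖₊ :=
  (ENNReal.div_le_iff (by simpa using hf) ENNReal.coe_ne_top).1 <|
    le_iSup₂ (f := fun (g : X →ᵇ ℝ) (_ : g ≠ 0) => (‖A g‖₊ : ℝ≥0∞) / ‖g‖₊) f hf

lemma norm_apply_le_toReal_opSemiNorm_mul {A : Op X} (hA : opSemiNorm A ≠ ⊤) (hA0 : A 0 = 0)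
    (f : X →ᵇ ℝ) : ‖A f‖ ≤ (opSemiNorm A).toReal * ‖f‖ := by
  rcases eq_or_ne f 0 with rfl | hf
  · simp [hA0]
  · simpa [ENNReal.toReal_mul] using ENNReal.toReal_mono
      (ENNReal.mul_ne_top hA ENNReal.coe_ne_top) (enorm_apply_le_opSemiNorm_mul A hf)

lemma opSemiNorm_le_ofReal {A : Op X} {K : ℝ} (hK : 0 ≤ K) (h : ∀ f, ‖A f‖ ≤ K * ‖f‖) :
    opSemiNorm A ≤ ENNReal.ofReal K := by
  refine iSup₂_le fun f hf => (ENNReal.div_le_iff (by simpa using hf) ENNReal.coe_ne_top).2 ?_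
  have key := ENNReal.ofReal_le_ofReal (h f)
  rwa [ENNReal.ofReal_mul hK, ← coe_nnnorm, ← coe_nnnorm, ENNReal.ofReal_coe_nnreal,
    ENNReal.ofReal_coe_nnreal] at key

lemma enorm_sub_le_opDist_mul (A B : Op X) (f : X →ᵇ ℝ) :
    (‖A f - B f‖₊ : ℝ≥0∞) ≤ opDist A B * (‖f‖₊ + 1) := by
  rcases eq_or_ne f 0 with rfl | hf
  · exact le_self_add.trans (le_mul_of_one_le_right zero_le le_add_self)
  · calc (‖A f - B f‖₊ : ℝ≥0∞) ≤ opSemiNorm (A - B) * ‖f‖₊ :=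
          enorm_apply_le_opSemiNorm_mul (A - B) hf
      _ ≤ opDist A B * (‖f‖₊ + 1) := by gcongr <;> [exact le_add_self; exact le_self_add]

lemma tendsto_apply_of_tendsto_opDist {ι : Type*} {l : Filter ι} {A : ι → Op X} {B : Op X}
    (h : Tendsto (fun i => opDist (A i) B) l (𝓝 0)) (f : X →ᵇ ℝ) :
    Tendsto (fun i => A i f) l (𝓝 (B f)) := by
  rw [tendsto_iff_edist_tendsto_0]
  have hbound : Tendsto (fun i => opDist (A i) B * (‖f‖₊ + 1)) l (𝓝 0) := by
    simpa using ENNReal.Tendsto.mul_const h (Or.inr (by simp))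
  refine tendsto_of_tendsto_of_tendsto_of_le_of_le tendsto_const_nhds hbound
    (fun _ => zero_le) fun i => ?_
  rw [edist_eq_enorm_sub]
  exact enorm_sub_le_opDist_mul _ _ f

end

namespace IsSublinearTransition
variable {X : Type*} [TopologicalSpace X] {A B : Op X}

lemma map_zero (hA : IsSublinearTransition A) : A 0 = 0 := by
  simpa using hA.1 0 le_rfl 0

lemma sub_le_apply_sub (hA : IsSublinearTransition A) (f g : X →ᵇ ℝ) (x : X) :
    A f x - A g x ≤ A (f - g) x := by
  have h := hA.2.1 (f - g) g x
  rw [sub_add_cancel] at h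
  linarith

lemma mono (hA : IsSublinearTransition A) {f g : X →ᵇ ℝ} (h : ∀ y, f y ≤ g y) (x : X) :
    A f x ≤ A g x := by
  have hfg : A (f - g) x ≤ 0 :=
    (hA.2.2 _ x).trans (Real.iSup_le (fun y => sub_nonpos.2 (h y)) le_rfl)
  linarith [hA.sub_le_apply_sub f g x]

lemma sub_le_norm_sub (hA : IsSublinearTransition A) (f g : X →ᵇ ℝ) (x : X) :
    A f x - A g x ≤ ‖f - g‖ :=
  (hA.sub_le_apply_sub f g x).trans ((hA.2.2 _ x).trans (f - g).iSup_apply_le_norm)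

lemma norm_sub_le (hA : IsSublinearTransition A) (f g : X →ᵇ ℝ) : ‖A f - A g‖ ≤ ‖f - g‖ := by
  refine (BoundedContinuousFunction.norm_le (norm_nonneg _)).2 fun x => ?_
  have hfg := hA.sub_le_norm_sub f g x
  have hgf := hA.sub_le_norm_sub g f x
  rw [norm_sub_rev] at hgf
  rw [BoundedContinuousFunction.coe_sub, Pi.sub_apply, Real.norm_eq_abs, abs_le]
  constructor <;> linarith

lemma norm_le (hA : IsSublinearTransition A) (f : X →ᵇ ℝ) : ‖A f‖ ≤ ‖f‖ := by
  simpa [hA.map_zero] using hA.norm_sub_le f 0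

protected lemma id : IsSublinearTransition (id : Op X) :=
  ⟨fun _ _ _ => rfl, fun _ _ _ => le_rfl, fun f x => f.le_iSup_apply x⟩

lemma comp (hA : IsSublinearTransition A) (hB : IsSublinearTransition B) :
    IsSublinearTransition (A ∘ B) := by
  refine ⟨fun c hc f => ?_, fun f g x => ?_, fun f x => ?_⟩
  · simp only [Function.comp_apply, hB.1 c hc f, hA.1 c hc (B f)]
  · calc A (B (f + g)) x ≤ A (B f + B g) x := hA.mono (fun y => by simpa using hB.2.1 f g y) x
      _ ≤ A (B f) x + A (B g) x := hA.2.1 _ _ x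
  · have : Nonempty X := ⟨x⟩
    exact (hA.2.2 (B f) x).trans (ciSup_le fun y => hB.2.2 f y)

lemma iterate (hA : IsSublinearTransition A) (n : ℕ) : IsSublinearTransition (A^[n]) := by
  induction n with
  | zero => exact IsSublinearTransition.id
  | succ n ih => rw [Function.iterate_succ']; exact hA.comp ih

lemma of_tendsto {ι : Type*} {l : Filter ι} [l.NeBot] {A : ι → Op X} {T : Op X}
    (hA : ∀ᶠ i in l, IsSublinearTransition (A i))
    (hT : ∀ f, Tendsto (fun i => A i f) l (𝓝 (T f))) : IsSublinearTransition T := by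
  have hTx : ∀ f x, Tendsto (fun i => A i f x) l (𝓝 (T f x)) := fun f x =>
    ((continuous_eval_const x).tendsto _).comp (hT f)
  refine ⟨fun c hc f => tendsto_nhds_unique (hT (c • f)) ?_, fun f g x => ?_, fun f x => ?_⟩
  · exact ((hT f).const_smul c).congr' (hA.mono fun i hi => (hi.1 c hc f).symm)
  · exact le_of_tendsto_of_tendsto (hTx (f + g) x) ((hTx f x).add (hTx g x))
      (hA.mono fun i hi => hi.2.1 f g x)
  · exact le_of_tendsto (hTx f x) (hA.mono fun i hi => hi.2.2 f x)

lemma tendsto_apply_apply {ι : Type*} {l : Filter ι} {A : ι → Op X} {T : Op X}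
    (hA : ∀ᶠ i in l, IsSublinearTransition (A i))
    (hT : ∀ f, Tendsto (fun i => A i f) l (𝓝 (T f)))
    {g : ι → X →ᵇ ℝ} {g₀ : X →ᵇ ℝ} (hg : Tendsto g l (𝓝 g₀)) :
    Tendsto (fun i => A i (g i)) l (𝓝 (T g₀)) := by
  rw [tendsto_iff_norm_sub_tendsto_zero] at hg ⊢
  have hbound := hg.add (tendsto_iff_norm_sub_tendsto_zero.1 (hT g₀))
  rw [add_zero] at hbound
  refine squeeze_zero' (Eventually.of_forall fun _ => norm_nonneg _) ?_ hbound
  filter_upwards [hA] with i hi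
  calc ‖A i (g i) - T g₀‖ ≤ ‖A i (g i) - A i g₀‖ + ‖A i g₀ - T g₀‖ :=
        norm_sub_le_norm_sub_add_norm_sub _ _ _
    _ ≤ ‖g i - g₀‖ + ‖A i g₀ - T g₀‖ := by gcongr; exact hi.norm_sub_le _ _

end IsSublinearTransition

namespace IsSublinearRate
variable {X : Type*} [TopologicalSpace X] {Q : Op X}

lemma map_zero (hQ : IsSublinearRate Q) : Q 0 = 0 := by
  simpa using hQ.1 0 le_rfl 0

lemma apply_add_const_le (hQ : IsSublinearRate Q) (f : X →ᵇ ℝ) (c : ℝ) (x : X) :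
    Q (f + const X c) x ≤ Q f x := by
  simpa [hQ.2.2.1 c] using hQ.2.1 f (const X c) x

lemma apply_le_mul_iSup_sub [DiscreteTopology X] (hQ : IsSublinearRate Q) {C : ℝ}
    (hC : ∀ f, ‖Q f‖ ≤ C * ‖f‖) (f : X →ᵇ ℝ) (x : X) :
    Q f x ≤ C * ((⨆ y, f y) - f x) := by
  classical
  set d := (⨆ y, f y) - f x
  have hd : 0 ≤ d := sub_nonneg.2 (f.le_iSup_apply x)
  -- `w` attains its maximum `d ≥ 0` at `x`, and `f = w + f x - d 1_x`
  set w := f - const X (f x) + d • indic x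
  have hw : ∀ y, w y = f y - f x + if y = x then d else 0 := fun y => by
    by_cases hy : y = x <;> simp [w, indic, hy]
  have hwx : w x = d := by simp [hw]
  have hwmax : (⨆ y, w y) = w x := by
    have : Nonempty X := ⟨x⟩
    refine le_antisymm (ciSup_le fun y => ?_) (w.le_iSup_apply x)
    rw [hw, hwx]
    split_ifs
    · simp_all
    · linarith [f.le_iSup_apply y]
  have hf : f = (w + const X (f x)) + (-d) • indic x := by
    ext y
    simp [w]
    ring
  calc Q f x ≤ Q (w + const X (f x)) x + Q ((-d) • indic x) x := by
        conv_lhs => rw [hf]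
        exact hQ.2.1 _ _ x
    _ ≤ 0 + C * d := by
        gcongr
        · exact (hQ.apply_add_const_le w _ x).trans (hQ.2.2.2 w x hwmax (hwx ▸ hd))
        · calc Q ((-d) • indic x) x ≤ ‖Q ((-d) • indic x)‖ := (Q _).apply_le_norm x
            _ ≤ C * d := by
              simpa [norm_smul, norm_indic, abs_of_nonneg hd] using hC ((-d) • indic x)
    _ = C * d := zero_add _

end IsSublinearRate

lemma norm_iterate_sub_iterate_le {X : Type*} [TopologicalSpace X] {A B : Op X}
    (hA : IsSublinearTransition A) (hB : IsSublinearTransition B) {ε : ℝ} (hε : 0 ≤ ε)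
    (hAB : ∀ f, ‖A f - B f‖ ≤ ε * ‖f‖) (n : ℕ) (f : X →ᵇ ℝ) :
    ‖A^[n] f - B^[n] f‖ ≤ n * ε * ‖f‖ := by
  induction n generalizing f with
  | zero => simp
  | succ n ih =>
    rw [Function.iterate_succ_apply, Function.iterate_succ_apply]
    calc ‖A^[n] (A f) - B^[n] (B f)‖
        ≤ ‖A^[n] (A f) - A^[n] (B f)‖ + ‖A^[n] (B f) - B^[n] (B f)‖ :=
          norm_sub_le_norm_sub_add_norm_sub _ _ _
      _ ≤ ε * ‖f‖ + n * ε * ‖f‖ := by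
          gcongr
          · exact ((hA.iterate n).norm_sub_le _ _).trans (hAB f)
          · exact (ih _).trans (by gcongr; exact hB.norm_le f)
      _ = (n + 1 : ℕ) * ε * ‖f‖ := by push_cast; ring

lemma natCast_mul_abs_div_sub_div_le (n : ℕ) (s t : ℝ) : n * |s / n - t / n| ≤ |s - t| := by
  rcases eq_or_ne n 0 with rfl | hn
  · simp
  · rw [div_sub_div_same, abs_div, Nat.abs_cast, mul_div_cancel₀ _ (Nat.cast_ne_zero.2 hn)]

section Euler
variable {X : Type*} [TopologicalSpace X] {Q : Op X} {C : ℝ}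

noncomputable def eulerStep (Q : Op X) (h : ℝ) : Op X := fun f => f + h • Q f

lemma euler_eq_iterate (Q : Op X) (t : ℝ) (n : ℕ) : euler Q t n = (eulerStep Q (t / n))^[n] :=
  rfl

lemma eulerStep_sub_eulerStep (Q : Op X) (h h' : ℝ) (f : X →ᵇ ℝ) :
    eulerStep Q h f - eulerStep Q h' f = (h - h') • Q f := by
  simp only [eulerStep]
  module

lemma euler_zero_left (Q : Op X) (n : ℕ) : euler Q 0 n = id := by
  have : eulerStep Q (0 / n) = id := funext fun f => by simp [eulerStep]
  rw [euler_eq_iterate, this, Function.iterate_id]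

lemma euler_nat_mul (Q : Op X) (a n : ℕ) (δ : ℝ) :
    euler Q (a * δ) (a * n) = (eulerStep Q (δ / n))^[a * n] := by
  rcases eq_or_ne a 0 with rfl | ha
  · simp only [zero_mul, Function.iterate_zero, euler_eq_iterate]
  · rw [euler_eq_iterate, Nat.cast_mul, mul_div_mul_left δ _ (Nat.cast_ne_zero.2 ha)]

lemma euler_add_nat_mul (Q : Op X) (a b n : ℕ) (δ : ℝ) :
    euler Q ((a + b : ℕ) * δ) ((a + b) * n) =
      euler Q (a * δ) (a * n) ∘ euler Q (b * δ) (b * n) := by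
  rw [euler_nat_mul, euler_nat_mul, euler_nat_mul, add_mul, Function.iterate_add]

variable [DiscreteTopology X]

lemma isSublinearTransition_eulerStep (hQ : IsSublinearRate Q) (hC : ∀ f, ‖Q f‖ ≤ C * ‖f‖)
    {h : ℝ} (h0 : 0 ≤ h) (h1 : h * C ≤ 1) : IsSublinearTransition (eulerStep Q h) := by
  refine ⟨fun c hc f => ?_, fun f g x => ?_, fun f x => ?_⟩
  · simp only [eulerStep, hQ.1 c hc f, smul_add, smul_comm h c]
  · have := hQ.2.1 f g x
    simp only [eulerStep, BoundedContinuousFunction.coe_add, BoundedContinuousFunction.coe_smul,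
      Pi.add_apply, smul_eq_mul]
    nlinarith
  · have hmax := mul_le_mul_of_nonneg_left (hQ.apply_le_mul_iSup_sub hC f x) h0
    have hgap := mul_nonneg (sub_nonneg.2 h1) (sub_nonneg.2 (f.le_iSup_apply x))
    simp only [eulerStep, BoundedContinuousFunction.coe_add, BoundedContinuousFunction.coe_smul,
      Pi.add_apply, smul_eq_mul]
    nlinarith

lemma isSublinearTransition_eulerStep_div (hQ : IsSublinearRate Q)
    (hC : ∀ f, ‖Q f‖ ≤ C * ‖f‖) {t : ℝ} (ht : 0 ≤ t) {n : ℕ} (hn : t * C ≤ n) :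
    IsSublinearTransition (eulerStep Q (t / n)) := by
  refine isSublinearTransition_eulerStep hQ hC (by positivity) ?_
  rcases n.eq_zero_or_pos with rfl | hn0
  · simp
  · rwa [div_mul_eq_mul_div, div_le_one (by positivity)]

lemma eventually_isSublinearTransition_euler (hQ : IsSublinearRate Q)
    (hC : ∀ f, ‖Q f‖ ≤ C * ‖f‖) {t : ℝ} (ht : 0 ≤ t) :
    ∀ᶠ n : ℕ in atTop, IsSublinearTransition (euler Q t n) :=
  (eventually_ge_atTop ⌈t * C⌉₊).mono fun n hn =>
    (isSublinearTransition_eulerStep_div hQ hC ht (Nat.ceil_le.1 hn)).iterate n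

lemma norm_euler_sub_euler_le (hQ : IsSublinearRate Q) (hC : ∀ f, ‖Q f‖ ≤ C * ‖f‖)
    (hC0 : 0 ≤ C) {s t : ℝ} (hs : 0 ≤ s) (ht : 0 ≤ t) {n : ℕ} (hns : s * C ≤ n)
    (hnt : t * C ≤ n) (f : X →ᵇ ℝ) :
    ‖euler Q s n f - euler Q t n f‖ ≤ |s - t| * C * ‖f‖ := by
  have hstep : ∀ g, ‖eulerStep Q (s / n) g - eulerStep Q (t / n) g‖ ≤ |s / n - t / n| * C * ‖g‖ :=
    fun g => by
      rw [eulerStep_sub_eulerStep, norm_smul, Real.norm_eq_abs, mul_assoc]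
      gcongr
      exact hC g
  calc ‖euler Q s n f - euler Q t n f‖ ≤ n * (|s / n - t / n| * C) * ‖f‖ :=
        norm_iterate_sub_iterate_le (isSublinearTransition_eulerStep_div hQ hC hs hns)
          (isSublinearTransition_eulerStep_div hQ hC ht hnt) (by positivity) hstep n f
    _ ≤ |s - t| * C * ‖f‖ := by
        rw [← mul_assoc]
        gcongr
        exact natCast_mul_abs_div_sub_div_le n s t

end Euler

section Limit
variable {X : Type*} [TopologicalSpace X] {Q : Op X}

lemma eq_id_of_tendsto_euler_zero {T : Op X}
    (hT : ∀ f, Tendsto (fun n => euler Q 0 n f) atTop (𝓝 (T f))) : T = id :=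
  funext fun f => tendsto_nhds_unique (hT f) (by simp [euler_zero_left])

variable [DiscreteTopology X] {C : ℝ}

lemma isSublinearTransition_of_tendsto_euler (hQ : IsSublinearRate Q)
    (hC : ∀ f, ‖Q f‖ ≤ C * ‖f‖) {t : ℝ} (ht : 0 ≤ t) {T : Op X}
    (hT : ∀ f, Tendsto (fun n => euler Q t n f) atTop (𝓝 (T f))) : IsSublinearTransition T :=
  .of_tendsto (eventually_isSublinearTransition_euler hQ hC ht) hT

lemma norm_sub_le_of_tendsto_euler (hQ : IsSublinearRate Q) (hC : ∀ f, ‖Q f‖ ≤ C * ‖f‖)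
    (hC0 : 0 ≤ C) {s t : ℝ} (hs : 0 ≤ s) (ht : 0 ≤ t) {S T : Op X}
    (hS : ∀ f, Tendsto (fun n => euler Q s n f) atTop (𝓝 (S f)))
    (hT : ∀ f, Tendsto (fun n => euler Q t n f) atTop (𝓝 (T f))) (f : X →ᵇ ℝ) :
    ‖S f - T f‖ ≤ |s - t| * C * ‖f‖ := by
  refine le_of_tendsto ((hS f).sub (hT f)).norm ?_
  filter_upwards [eventually_ge_atTop ⌈s * C⌉₊, eventually_ge_atTop ⌈t * C⌉₊] with n hns hnt
  exact norm_euler_sub_euler_le hQ hC hC0 hs ht (Nat.ceil_le.1 hns) (Nat.ceil_le.1 hnt) f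

variable {E : ℝ → Op X}

lemma apply_add_nat_mul_eq_of_tendsto_euler (hQ : IsSublinearRate Q)
    (hC : ∀ f, ‖Q f‖ ≤ C * ‖f‖)
    (hE : ∀ t, 0 ≤ t → ∀ f, Tendsto (fun n => euler Q t n f) atTop (𝓝 (E t f)))
    {δ : ℝ} (hδ : 0 ≤ δ) {a b : ℕ} (ha : 0 < a) (hb : 0 < b) (f : X →ᵇ ℝ) :
    E ((a + b : ℕ) * δ) f = E (a * δ) (E (b * δ) f) := by
  have hmul : ∀ {c : ℕ}, 0 < c → Tendsto (fun n : ℕ => c * n) atTop atTop := fun hc =>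
    tendsto_id.const_mul_atTop' hc
  have hsum := (hE ((a + b : ℕ) * δ) (by positivity) f).comp (hmul (Nat.add_pos_left ha b))
  have hcomp := IsSublinearTransition.tendsto_apply_apply
    ((hmul ha).eventually (eventually_isSublinearTransition_euler hQ hC (by positivity)))
    (fun g => (hE (a * δ) (by positivity) g).comp (hmul ha))
    ((hE (b * δ) (by positivity) f).comp (hmul hb))
  refine tendsto_nhds_unique hsum (hcomp.congr fun n => ?_)
  simp only [Function.comp_apply, euler_add_nat_mul]

lemma exists_pos_nat_mul_mem_Ico {s δ : ℝ} (hs : 0 < s) (hδ : 0 < δ) :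
    ∃ a : ℕ, 0 < a ∧ s ≤ a * δ ∧ a * δ < s + δ := by
  refine ⟨⌈s / δ⌉₊, Nat.ceil_pos.2 (div_pos hs hδ), (div_le_iff₀ hδ).1 (Nat.le_ceil _), ?_⟩
  have := Nat.ceil_lt_add_one (div_pos hs hδ).le
  rwa [← lt_div_iff₀ hδ, add_div, div_self hδ.ne']

/-- The defect of the semigroup law is controlled by commensurable times `a(t/m) ≈ s`. -/
lemma norm_apply_add_sub_apply_apply_le (hQ : IsSublinearRate Q)
    (hC : ∀ f, ‖Q f‖ ≤ C * ‖f‖) (hC0 : 0 ≤ C)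
    (hE : ∀ t, 0 ≤ t → ∀ f, Tendsto (fun n => euler Q t n f) atTop (𝓝 (E t f)))
    {s t : ℝ} (hs : 0 < s) (ht : 0 < t) {m : ℕ} (hm : 0 < m) (f : X →ᵇ ℝ) :
    ‖E (s + t) f - E s (E t f)‖ ≤ C * (‖f‖ + ‖E t f‖) * (t / m) := by
  set δ := t / m
  have hδ : 0 < δ := by positivity
  obtain ⟨a, ha, hs_le, hs_gt⟩ := exists_pos_nat_mul_mem_Ico hs hδ
  have hexact : E (a * δ + t) f = E (a * δ) (E t f) := by
    have := apply_add_nat_mul_eq_of_tendsto_euler hQ hC hE hδ.le ha hm f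
    rwa [Nat.cast_add, add_mul, mul_div_cancel₀ t (by positivity)] at this
  have hLip : ∀ {u v : ℝ}, 0 ≤ u → 0 ≤ v → ∀ g, ‖E u g - E v g‖ ≤ |u - v| * C * ‖g‖ :=
    fun hu hv => norm_sub_le_of_tendsto_euler hQ hC hC0 hu hv (hE _ hu) (hE _ hv)
  have hdist : |s - a * δ| ≤ δ := abs_le.2 ⟨by linarith, by linarith⟩
  calc ‖E (s + t) f - E s (E t f)‖
      = ‖(E (s + t) f - E (a * δ + t) f) + (E (a * δ) (E t f) - E s (E t f))‖ := by
        rw [hexact]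
        abel_nf
    _ ≤ ‖E (s + t) f - E (a * δ + t) f‖ + ‖E (a * δ) (E t f) - E s (E t f)‖ := norm_add_le _ _
    _ ≤ |s + t - (a * δ + t)| * C * ‖f‖ + |a * δ - s| * C * ‖E t f‖ :=
        add_le_add (hLip (by positivity) (by positivity) f) (hLip (by positivity) hs.le (E t f))
    _ ≤ δ * C * ‖f‖ + δ * C * ‖E t f‖ := by
        rw [add_sub_add_right_eq_sub, abs_sub_comm (a * δ)]
        gcongr
    _ = C * (‖f‖ + ‖E t f‖) * δ := by ring

lemma add_eq_comp_of_tendsto_euler (hQ : IsSublinearRate Q) (hC : ∀ f, ‖Q f‖ ≤ C * ‖f‖)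
    (hC0 : 0 ≤ C) (hE : ∀ t, 0 ≤ t → ∀ f, Tendsto (fun n => euler Q t n f) atTop (𝓝 (E t f)))
    {s t : ℝ} (hs : 0 ≤ s) (ht : 0 ≤ t) : E (s + t) = E s ∘ E t := by
  have hE0 : E 0 = id := eq_id_of_tendsto_euler_zero (hE 0 le_rfl)
  rcases hs.eq_or_lt with rfl | hs
  · simp [hE0]
  rcases ht.eq_or_lt with rfl | ht
  · simp [hE0]
  funext f
  have hbound : Tendsto (fun m : ℕ => C * (‖f‖ + ‖E t f‖) * (t / m)) atTop (𝓝 0) := by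
    simpa using (tendsto_const_div_atTop_nhds_zero_nat t).const_mul (C * (‖f‖ + ‖E t f‖))
  have hzero : ‖E (s + t) f - E s (E t f)‖ ≤ 0 :=
    ge_of_tendsto hbound ((eventually_gt_atTop 0).mono fun m hm =>
      norm_apply_add_sub_apply_apply_le hQ hC hC0 hE hs ht hm f)
  exact sub_eq_zero.1 (norm_le_zero_iff.1 hzero)

end Limit

lemma isUniformlyContinuousSG_of_opSemiNorm_sub_le {X : Type*} [TopologicalSpace X]
    {S : ℝ → Op X} {C : ℝ}
    (h : ∀ s t, 0 ≤ s → 0 ≤ t → opSemiNorm (S s - S t) ≤ ENNReal.ofReal (|s - t| * C)) :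
    IsUniformlyContinuousSG S := by
  intro t ht
  have hbound : Tendsto (fun s => ENNReal.ofReal (|s - t| * C)) (𝓝[Set.Ici 0] t) (𝓝 0) := by
    have hcont : Continuous fun s : ℝ => ENNReal.ofReal (|s - t| * C) :=
      ENNReal.continuous_ofReal.comp (by fun_prop)
    simpa using (hcont.tendsto t).mono_left nhdsWithin_le_nhds
  refine tendsto_of_tendsto_of_tendsto_of_le_of_le' tendsto_const_nhds hbound
    (Eventually.of_forall fun _ => zero_le) ?_
  filter_upwards [self_mem_nhdsWithin] with s hs
  exact h s t hs ht

theorem stmt_11_general {X : Type*} [TopologicalSpace X] [DiscreteTopology X]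
    (Q : Op X) (hQ : IsSublinearRate Q) (hQb : opSemiNorm Q ≠ ⊤)
    (E : ℝ → Op X)
    (hE : ∀ t : ℝ, 0 ≤ t → Tendsto (fun n => opDist (euler Q t n) (E t)) atTop (nhds 0)) :
    E 0 = id ∧
    (∀ s t : ℝ, 0 ≤ s → 0 ≤ t → E (s + t) = E s ∘ E t) ∧
    (∀ t : ℝ, 0 ≤ t → IsSublinearTransition (E t)) ∧
    (∀ t : ℝ, 0 ≤ t →
      Tendsto (fun s => opSemiNorm (E s - E t)) (nhdsWithin t (Set.Ici 0)) (nhds 0)) := by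
  set C := (opSemiNorm Q).toReal
  have hC : ∀ f, ‖Q f‖ ≤ C * ‖f‖ := norm_apply_le_toReal_opSemiNorm_mul hQb hQ.map_zero
  have hC0 : 0 ≤ C := ENNReal.toReal_nonneg
  have hE' : ∀ t, 0 ≤ t → ∀ f, Tendsto (fun n => euler Q t n f) atTop (𝓝 (E t f)) :=
    fun t ht => tendsto_apply_of_tendsto_opDist (hE t ht)
  refine ⟨eq_id_of_tendsto_euler_zero (hE' 0 le_rfl),
    fun s t hs ht => add_eq_comp_of_tendsto_euler hQ hC hC0 hE' hs ht,
    fun t ht => isSublinearTransition_of_tendsto_euler hQ hC ht (hE' t ht),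
    isUniformlyContinuousSG_of_opSemiNorm_sub_le (C := C) fun s t hs ht => ?_⟩
  exact opSemiNorm_le_ofReal (by positivity)
    (norm_sub_le_of_tendsto_euler hQ hC hC0 hs ht (hE' s hs) (hE' t ht))

theorem stmt_11 {X : Type*} [Countable X] [TopologicalSpace X] [DiscreteTopology X]
    (Q : Op X) (hQ : IsSublinearRate Q) (hQb : opSemiNorm Q ≠ ⊤)
    (E : ℝ → Op X)
    (hE : ∀ t : ℝ, 0 ≤ t → Tendsto (fun n => opDist (euler Q t n) (E t)) atTop (nhds 0)) :
    E 0 = id ∧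
    (∀ s t : ℝ, 0 ≤ s → 0 ≤ t → E (s + t) = E s ∘ E t) ∧
    (∀ t : ℝ, 0 ≤ t → IsSublinearTransition (E t)) ∧
    (∀ t : ℝ, 0 ≤ t →
      Tendsto (fun s => opSemiNorm (E s - E t)) (nhdsWithin t (Set.Ici 0)) (nhds 0)) :=
  stmt_11_general Q hQ hQb E hE
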